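/- arXiv:2002.08767 — 2 statements merged into one kernel-verified Lean document; each statement's English description precedes it below -/
import Mathlib

section
/- Let Y₃ and Y₄ be the Hamiltonian vector fields of J₃ = Re(A·B*) and J₄ = Im(A·B*), i.e. Y_k = (∂J_k/∂p_a, ∂J_k/∂p_b, −∂J_k/∂a, −∂J_k/∂b). Then at every point of U the dynamical vector field Γ is orthogonal to Y₄ with respect to Ω₁ and orthogonal to Y₃ with respect to Ω₂: Ω₁(Γ, Y₄) = 0 and Ω₂(Γ, Y₃) = 0. -/
noncomputable section

open Complex

/-! Partial derivatives of complex-valued functions on phase space `(a, b, pa, pb)`. -/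

def pda (f : ℝ → ℝ → ℝ → ℝ → ℂ) (a b pa pb : ℝ) : ℂ := deriv (fun t => f t b pa pb) a
def pdb (f : ℝ → ℝ → ℝ → ℝ → ℂ) (a b pa pb : ℝ) : ℂ := deriv (fun t => f a t pa pb) b
def pdpa (f : ℝ → ℝ → ℝ → ℝ → ℂ) (a b pa pb : ℝ) : ℂ := deriv (fun t => f a b t pb) pa
def pdpb (f : ℝ → ℝ → ℝ → ℝ → ℂ) (a b pa pb : ℝ) : ℂ := deriv (fun t => f a b pa t) pb

/-- Poisson bracket of two complex-valued functions on phase space. -/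
def PB (f g : ℝ → ℝ → ℝ → ℝ → ℂ) (a b pa pb : ℝ) : ℂ :=
  pda f a b pa pb * pdpa g a b pa pb + pdb f a b pa pb * pdpb g a b pa pb
    - pdpa f a b pa pb * pda g a b pa pb - pdpb f a b pa pb * pdb g a b pa pb

/-! Partial derivatives of real-valued functions on phase space. -/

def pdaR (f : ℝ → ℝ → ℝ → ℝ → ℝ) (a b pa pb : ℝ) : ℝ := deriv (fun t => f t b pa pb) a
def pdbR (f : ℝ → ℝ → ℝ → ℝ → ℝ) (a b pa pb : ℝ) : ℝ := deriv (fun t => f a t pa pb) b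
def pdpaR (f : ℝ → ℝ → ℝ → ℝ → ℝ) (a b pa pb : ℝ) : ℝ := deriv (fun t => f a b t pb) pa
def pdpbR (f : ℝ → ℝ → ℝ → ℝ → ℝ) (a b pa pb : ℝ) : ℝ := deriv (fun t => f a b pa t) pb

/-- Poisson bracket of two real-valued functions on phase space. -/
def PBR (f g : ℝ → ℝ → ℝ → ℝ → ℝ) (a b pa pb : ℝ) : ℝ :=
  pdaR f a b pa pb * pdpaR g a b pa pb + pdbR f a b pa pb * pdpbR g a b pa pb
    - pdpaR f a b pa pb * pdaR g a b pa pb - pdpbR f a b pa pb * pdbR g a b pa pb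

/-- The angular momentum `J = a p_b - b p_a`. -/
def Jang (a b pa pb : ℝ) : ℝ := a * pb - b * pa

/-- The Kepler-related Hamiltonian `H_{K2}` (real-valued). -/
def HR (k1 k2 k3 : ℝ) (a b pa pb : ℝ) : ℝ :=
  (pa ^ 2 + pb ^ 2) / (2 * (a ^ 2 + b ^ 2)) + (k1 + k2 * a + k3 * b) / (a ^ 2 + b ^ 2)

/-- The Kepler-related Hamiltonian, viewed as a complex-valued function. -/
def HC (k1 k2 k3 : ℝ) (a b pa pb : ℝ) : ℂ := (HR k1 k2 k3 a b pa pb : ℂ)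

/-- The function `lambda = J/(a^2+b^2)^2`. -/
def lam (a b pa pb : ℝ) : ℝ := Jang a b pa pb / (a ^ 2 + b ^ 2) ^ 2

def A1 (a b pa pb : ℝ) : ℝ := (a ^ 2 - b ^ 2) / (a ^ 2 + b ^ 2)
def A2 (a b pa pb : ℝ) : ℝ := 2 * a * b / (a ^ 2 + b ^ 2)

/-- The complex function `A = A1 + i A2`. -/
def Afun (a b pa pb : ℝ) : ℂ := (A1 a b pa pb : ℂ) + Complex.I * (A2 a b pa pb : ℂ)

def B1 (k1 : ℝ) (a b pa pb : ℝ) : ℝ := (Jang a b pa pb) ^ 2 / (a ^ 2 + b ^ 2) + k1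
def B2 (k2 k3 : ℝ) (a b pa pb : ℝ) : ℝ :=
  Jang a b pa pb * (a * pa + b * pb) / (a ^ 2 + b ^ 2) + k3 * a - k2 * b

/-- The complex function `B = B1 + i B2`. -/
def Bfun (k1 k2 k3 : ℝ) (a b pa pb : ℝ) : ℂ :=
  (B1 k1 a b pa pb : ℂ) + Complex.I * (B2 k2 k3 a b pa pb : ℂ)

def Ma1 (k1 k2 k3 : ℝ) (a b pa pb : ℝ) : ℝ :=
  (Jang a b pa pb * pa - (k2 * b - k3 * a) * a) / Real.sqrt (a ^ 2 + b ^ 2)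
def Ma2 (k1 k2 k3 : ℝ) (a b pa pb : ℝ) : ℝ :=
  (-(Jang a b pa pb) * pb - 2 * k1 * a + (k2 * b - k3 * a) * b) / Real.sqrt (a ^ 2 + b ^ 2)

/-- The complex function `M_a = M_{a1} + i M_{a2}`. -/
def Mafun (k1 k2 k3 : ℝ) (a b pa pb : ℝ) : ℂ :=
  (Ma1 k1 k2 k3 a b pa pb : ℂ) + Complex.I * (Ma2 k1 k2 k3 a b pa pb : ℂ)

def Mb1 (k1 k2 k3 : ℝ) (a b pa pb : ℝ) : ℝ :=
  (Jang a b pa pb * pb - (k2 * b - k3 * a) * b) / Real.sqrt (a ^ 2 + b ^ 2)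
def Mb2 (k1 k2 k3 : ℝ) (a b pa pb : ℝ) : ℝ :=
  (Jang a b pa pb * pa - 2 * k1 * b - (k2 * b - k3 * a) * a) / Real.sqrt (a ^ 2 + b ^ 2)

/-- The complex function `M_b = M_{b1} + i M_{b2}`. -/
def Mbfun (k1 k2 k3 : ℝ) (a b pa pb : ℝ) : ℂ :=
  (Mb1 k1 k2 k3 a b pa pb : ℂ) + Complex.I * (Mb2 k1 k2 k3 a b pa pb : ℂ)

/-- Directional derivative of a complex-valued function along a (real) tangent vector `v ∈ ℝ⁴`,
with coordinates ordered `(a, b, p_a, p_b)`. -/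
def dd (f : ℝ → ℝ → ℝ → ℝ → ℂ) (a b pa pb : ℝ) (v : Fin 4 → ℝ) : ℂ :=
  pda f a b pa pb * (v 0 : ℂ) + pdb f a b pa pb * (v 1 : ℂ)
    + pdpa f a b pa pb * (v 2 : ℂ) + pdpb f a b pa pb * (v 3 : ℂ)

/-- Directional derivative of a real-valued function along a tangent vector `v ∈ ℝ⁴`. -/
def ddR (f : ℝ → ℝ → ℝ → ℝ → ℝ) (a b pa pb : ℝ) (v : Fin 4 → ℝ) : ℝ :=
  pdaR f a b pa pb * v 0 + pdbR f a b pa pb * v 1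
    + pdpaR f a b pa pb * v 2 + pdpbR f a b pa pb * v 3

/-- The 2-form `dF ∧ dG` evaluated on a pair of tangent vectors. -/
def wedgeR (f g : ℝ → ℝ → ℝ → ℝ → ℝ) (a b pa pb : ℝ) (u v : Fin 4 → ℝ) : ℝ :=
  ddR f a b pa pb u * ddR g a b pa pb v - ddR f a b pa pb v * ddR g a b pa pb u

/-- Hamiltonian vector field of a real-valued function:
`(∂f/∂p_a, ∂f/∂p_b, -∂f/∂a, -∂f/∂b)`. -/
def hamVF (f : ℝ → ℝ → ℝ → ℝ → ℝ) (a b pa pb : ℝ) : Fin 4 → ℝ :=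
  ![pdpaR f a b pa pb, pdpbR f a b pa pb, -pdaR f a b pa pb, -pdbR f a b pa pb]

/-- Hamiltonian vector field of a complex-valued function. -/
def hamVFC (f : ℝ → ℝ → ℝ → ℝ → ℂ) (a b pa pb : ℝ) : Fin 4 → ℂ :=
  ![pdpa f a b pa pb, pdpb f a b pa pb, -pda f a b pa pb, -pdb f a b pa pb]

/-- The Hamiltonian vector field `Γ` of `H_{K2}`. -/
def GammaVF (k1 k2 k3 : ℝ) (a b pa pb : ℝ) : Fin 4 → ℝ := hamVF (HR k1 k2 k3) a b pa pb

/-- The real first integral `J₃ = Re (A·B*)`. -/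
def J3fun (k1 k2 k3 : ℝ) (a b pa pb : ℝ) : ℝ :=
  (Afun a b pa pb * (starRingEnd ℂ) (Bfun k1 k2 k3 a b pa pb)).re

/-- The real first integral `J₄ = Im (A·B*)`. -/
def J4fun (k1 k2 k3 : ℝ) (a b pa pb : ℝ) : ℝ :=
  (Afun a b pa pb * (starRingEnd ℂ) (Bfun k1 k2 k3 a b pa pb)).im

/-- The explicit coordinate expression for `J₃`. -/
def J3ex (k1 k2 k3 : ℝ) (a b pa pb : ℝ) : ℝ :=
  Jang a b pa pb * (a * pb + b * pa) / (a ^ 2 + b ^ 2)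
    + 2 * ((k1 / 2) * ((a ^ 2 - b ^ 2) / (a ^ 2 + b ^ 2))
        - k2 * (a * b ^ 2 / (a ^ 2 + b ^ 2)) + k3 * (a ^ 2 * b / (a ^ 2 + b ^ 2)))

/-- The explicit coordinate expression for `J₄`. -/
def J4ex (k1 k2 k3 : ℝ) (a b pa pb : ℝ) : ℝ :=
  Jang a b pa pb * (a * pa - b * pb) / (a ^ 2 + b ^ 2)
    - 2 * (k1 * (a * b / (a ^ 2 + b ^ 2))
        + (k2 / 2) * (b * (a ^ 2 - b ^ 2) / (a ^ 2 + b ^ 2))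
        + (k3 / 2) * (a * (b ^ 2 - a ^ 2) / (a ^ 2 + b ^ 2)))

/-- The real first integral `K₃ = Re (M_a·M_b*)`. -/
def K3fun (k1 k2 k3 : ℝ) (a b pa pb : ℝ) : ℝ :=
  (Mafun k1 k2 k3 a b pa pb * (starRingEnd ℂ) (Mbfun k1 k2 k3 a b pa pb)).re

/-- The real first integral `K₄ = Im (M_a·M_b*)`. -/
def K4fun (k1 k2 k3 : ℝ) (a b pa pb : ℝ) : ℝ :=
  (Mafun k1 k2 k3 a b pa pb * (starRingEnd ℂ) (Mbfun k1 k2 k3 a b pa pb)).im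

/-- The real 2-form `Ω₁ = dA₁ ∧ dB₁ + dA₂ ∧ dB₂`. -/
def Om1 (k1 k2 k3 : ℝ) (a b pa pb : ℝ) (u v : Fin 4 → ℝ) : ℝ :=
  wedgeR A1 (B1 k1) a b pa pb u v + wedgeR A2 (B2 k2 k3) a b pa pb u v

/-- The real 2-form `Ω₂ = -dA₁ ∧ dB₂ + dA₂ ∧ dB₁`. -/
def Om2 (k1 k2 k3 : ℝ) (a b pa pb : ℝ) (u v : Fin 4 → ℝ) : ℝ :=
  -wedgeR A1 (B2 k2 k3) a b pa pb u v + wedgeR A2 (B1 k1) a b pa pb u v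

/-- The real 2-form `Ω_{M1} = dM_{a1} ∧ dM_{b1} + dM_{a2} ∧ dM_{b2}`. -/
def OmM1 (k1 k2 k3 : ℝ) (a b pa pb : ℝ) (u v : Fin 4 → ℝ) : ℝ :=
  wedgeR (Ma1 k1 k2 k3) (Mb1 k1 k2 k3) a b pa pb u v
    + wedgeR (Ma2 k1 k2 k3) (Mb2 k1 k2 k3) a b pa pb u v

/-- The real 2-form `Ω_{M2} = -dM_{a1} ∧ dM_{b2} + dM_{a2} ∧ dM_{b1}`. -/
def OmM2 (k1 k2 k3 : ℝ) (a b pa pb : ℝ) (u v : Fin 4 → ℝ) : ℝ :=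
  -wedgeR (Ma1 k1 k2 k3) (Mb2 k1 k2 k3) a b pa pb u v
    + wedgeR (Ma2 k1 k2 k3) (Mb1 k1 k2 k3) a b pa pb u v

/-- The standard basis vectors of `ℝ⁴`. -/
def ebasis (j : Fin 4) : Fin 4 → ℝ := Pi.single j 1

/-! Along the flow of `H`, both `A = e^{2iθ}` and `B` rotate with the angular velocity `2λ` of
`A`, where `λ = J/(a²+b²)²`: `dA[Γ] = 2iλA` and `dB[Γ] = 2iλB`. Feeding this into the
contractions of `Ω₁`, `Ω₂` with `Γ` and applying the Leibniz rule to `J₃ + iJ₄ = A·B*` gives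
`Ω₁(Γ, ·) = -2λ dJ₄` and `Ω₂(Γ, ·) = 2λ dJ₃`, and `dJ[Y_J] = 0` for every Hamiltonian vector
field `Y_J`. -/

section PartialDerivatives

variable {f g : ℝ → ℝ → ℝ → ℝ → ℝ} {a b pa pb : ℝ}

def SeparatelyDifferentiableAt (f : ℝ → ℝ → ℝ → ℝ → ℝ) (a b pa pb : ℝ) : Prop :=
  DifferentiableAt ℝ (fun t => f t b pa pb) a ∧ DifferentiableAt ℝ (fun t => f a t pa pb) b ∧
    DifferentiableAt ℝ (fun t => f a b t pb) pa ∧ DifferentiableAt ℝ (fun t => f a b pa t) pb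

theorem SeparatelyDifferentiableAt.mul (hf : SeparatelyDifferentiableAt f a b pa pb)
    (hg : SeparatelyDifferentiableAt g a b pa pb) :
    SeparatelyDifferentiableAt (fun a b pa pb => f a b pa pb * g a b pa pb) a b pa pb :=
  ⟨hf.1.mul hg.1, hf.2.1.mul hg.2.1, hf.2.2.1.mul hg.2.2.1, hf.2.2.2.mul hg.2.2.2⟩

theorem ddR_add (hf : SeparatelyDifferentiableAt f a b pa pb)
    (hg : SeparatelyDifferentiableAt g a b pa pb) (v : Fin 4 → ℝ) :
    ddR (fun a b pa pb => f a b pa pb + g a b pa pb) a b pa pb v =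
      ddR f a b pa pb v + ddR g a b pa pb v := by
  simp only [ddR, pdaR, pdbR, pdpaR, pdpbR]
  rw [deriv_fun_add hf.1 hg.1, deriv_fun_add hf.2.1 hg.2.1, deriv_fun_add hf.2.2.1 hg.2.2.1,
    deriv_fun_add hf.2.2.2 hg.2.2.2]
  ring

theorem ddR_sub (hf : SeparatelyDifferentiableAt f a b pa pb)
    (hg : SeparatelyDifferentiableAt g a b pa pb) (v : Fin 4 → ℝ) :
    ddR (fun a b pa pb => f a b pa pb - g a b pa pb) a b pa pb v =
      ddR f a b pa pb v - ddR g a b pa pb v := by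
  simp only [ddR, pdaR, pdbR, pdpaR, pdpbR]
  rw [deriv_fun_sub hf.1 hg.1, deriv_fun_sub hf.2.1 hg.2.1, deriv_fun_sub hf.2.2.1 hg.2.2.1,
    deriv_fun_sub hf.2.2.2 hg.2.2.2]
  ring

theorem ddR_mul (hf : SeparatelyDifferentiableAt f a b pa pb)
    (hg : SeparatelyDifferentiableAt g a b pa pb) (v : Fin 4 → ℝ) :
    ddR (fun a b pa pb => f a b pa pb * g a b pa pb) a b pa pb v =
      f a b pa pb * ddR g a b pa pb v + g a b pa pb * ddR f a b pa pb v := by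
  simp only [ddR, pdaR, pdbR, pdpaR, pdpbR]
  rw [deriv_fun_mul hf.1 hg.1, deriv_fun_mul hf.2.1 hg.2.1, deriv_fun_mul hf.2.2.1 hg.2.2.1,
    deriv_fun_mul hf.2.2.2 hg.2.2.2]
  ring

theorem ddR_hamVF_self : ddR f a b pa pb (hamVF f a b pa pb) = 0 := by
  simp only [ddR, hamVF, Matrix.cons_val_zero, Matrix.cons_val_one, Matrix.cons_val_two,
    Matrix.cons_val_three, Matrix.head_cons, Matrix.tail_cons]
  ring

end PartialDerivatives

section Rotation

variable {A₁ A₂ B₁ B₂ : ℝ → ℝ → ℝ → ℝ → ℝ} {a b pa pb μ : ℝ} {u : Fin 4 → ℝ}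

theorem wedgeR_add_wedgeR_of_rotating (hA₁ : SeparatelyDifferentiableAt A₁ a b pa pb)
    (hA₂ : SeparatelyDifferentiableAt A₂ a b pa pb) (hB₁ : SeparatelyDifferentiableAt B₁ a b pa pb)
    (hB₂ : SeparatelyDifferentiableAt B₂ a b pa pb)
    (hA₁u : ddR A₁ a b pa pb u = -μ * A₂ a b pa pb) (hA₂u : ddR A₂ a b pa pb u = μ * A₁ a b pa pb)
    (hB₁u : ddR B₁ a b pa pb u = -μ * B₂ a b pa pb) (hB₂u : ddR B₂ a b pa pb u = μ * B₁ a b pa pb)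
    (v : Fin 4 → ℝ) :
    wedgeR A₁ B₁ a b pa pb u v + wedgeR A₂ B₂ a b pa pb u v =
      -μ * ddR (fun a b pa pb => A₂ a b pa pb * B₁ a b pa pb - A₁ a b pa pb * B₂ a b pa pb)
        a b pa pb v := by
  rw [ddR_sub (hA₂.mul hB₁) (hA₁.mul hB₂), ddR_mul hA₂ hB₁, ddR_mul hA₁ hB₂]
  simp only [wedgeR, hA₁u, hA₂u, hB₁u, hB₂u]
  ring

theorem neg_wedgeR_add_wedgeR_of_rotating (hA₁ : SeparatelyDifferentiableAt A₁ a b pa pb)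
    (hA₂ : SeparatelyDifferentiableAt A₂ a b pa pb) (hB₁ : SeparatelyDifferentiableAt B₁ a b pa pb)
    (hB₂ : SeparatelyDifferentiableAt B₂ a b pa pb)
    (hA₁u : ddR A₁ a b pa pb u = -μ * A₂ a b pa pb) (hA₂u : ddR A₂ a b pa pb u = μ * A₁ a b pa pb)
    (hB₁u : ddR B₁ a b pa pb u = -μ * B₂ a b pa pb) (hB₂u : ddR B₂ a b pa pb u = μ * B₁ a b pa pb)
    (v : Fin 4 → ℝ) :
    -wedgeR A₁ B₂ a b pa pb u v + wedgeR A₂ B₁ a b pa pb u v =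
      μ * ddR (fun a b pa pb => A₁ a b pa pb * B₁ a b pa pb + A₂ a b pa pb * B₂ a b pa pb)
        a b pa pb v := by
  rw [ddR_add (hA₁.mul hB₁) (hA₂.mul hB₂), ddR_mul hA₁ hB₁, ddR_mul hA₂ hB₂]
  simp only [wedgeR, hA₁u, hA₂u, hB₁u, hB₂u]
  ring

end Rotation

section PhaseSpaceFunctions

variable {k1 k2 k3 a b pa pb : ℝ}

theorem hasDerivAt_sq_add_sq_a : HasDerivAt (fun t => t ^ 2 + b ^ 2) (2 * a) a := by
  simpa using (hasDerivAt_pow 2 a).add_const (b ^ 2)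

theorem hasDerivAt_sq_add_sq_b : HasDerivAt (fun t => a ^ 2 + t ^ 2) (2 * b) b := by
  simpa using (hasDerivAt_pow 2 b).const_add (a ^ 2)

theorem hasDerivAt_Jang_a : HasDerivAt (fun t => Jang t b pa pb) pb a := by
  unfold Jang
  simpa using ((hasDerivAt_id a).mul_const pb).sub_const (b * pa)

theorem hasDerivAt_Jang_b : HasDerivAt (fun t => Jang a t pa pb) (-pa) b := by
  unfold Jang
  simpa using ((hasDerivAt_id b).mul_const pa).const_sub (a * pb)

theorem hasDerivAt_Jang_pa : HasDerivAt (fun t => Jang a b t pb) (-b) pa := by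
  unfold Jang
  simpa using ((hasDerivAt_id pa).const_mul b).const_sub (a * pb)

theorem hasDerivAt_Jang_pb : HasDerivAt (fun t => Jang a b pa t) a pb := by
  unfold Jang
  simpa using ((hasDerivAt_id pb).const_mul a).sub_const (b * pa)

theorem hasDerivAt_A1_a (hU : a ^ 2 + b ^ 2 ≠ 0) :
    HasDerivAt (fun t => A1 t b pa pb) (4 * a * b ^ 2 / (a ^ 2 + b ^ 2) ^ 2) a := by
  refine (((hasDerivAt_pow 2 a).sub_const (b ^ 2)).div hasDerivAt_sq_add_sq_a hU).congr_deriv ?_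
  field_simp
  ring

theorem hasDerivAt_A1_b (hU : a ^ 2 + b ^ 2 ≠ 0) :
    HasDerivAt (fun t => A1 a t pa pb) (-4 * a ^ 2 * b / (a ^ 2 + b ^ 2) ^ 2) b := by
  refine (((hasDerivAt_pow 2 b).const_sub (a ^ 2)).div hasDerivAt_sq_add_sq_b hU).congr_deriv ?_
  field_simp
  ring

theorem hasDerivAt_A2_a (hU : a ^ 2 + b ^ 2 ≠ 0) :
    HasDerivAt (fun t => A2 t b pa pb) (2 * b * (b ^ 2 - a ^ 2) / (a ^ 2 + b ^ 2) ^ 2) a := by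
  refine ((((hasDerivAt_id' a).const_mul 2).mul_const b).div hasDerivAt_sq_add_sq_a
    hU).congr_deriv ?_
  field_simp
  ring

theorem hasDerivAt_A2_b (hU : a ^ 2 + b ^ 2 ≠ 0) :
    HasDerivAt (fun t => A2 a t pa pb) (2 * a * (a ^ 2 - b ^ 2) / (a ^ 2 + b ^ 2) ^ 2) b := by
  refine (((hasDerivAt_id' b).const_mul (2 * a)).div hasDerivAt_sq_add_sq_b hU).congr_deriv ?_
  field_simp
  ring

theorem hasDerivAt_B1_a (hU : a ^ 2 + b ^ 2 ≠ 0) :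
    HasDerivAt (fun t => B1 k1 t b pa pb)
      (2 * Jang a b pa pb * pb / (a ^ 2 + b ^ 2)
        - 2 * a * Jang a b pa pb ^ 2 / (a ^ 2 + b ^ 2) ^ 2) a := by
  refine (((hasDerivAt_Jang_a.fun_pow 2).div hasDerivAt_sq_add_sq_a hU).add_const k1).congr_deriv ?_
  field_simp
  ring

theorem hasDerivAt_B1_b (hU : a ^ 2 + b ^ 2 ≠ 0) :
    HasDerivAt (fun t => B1 k1 a t pa pb)
      (-2 * Jang a b pa pb * pa / (a ^ 2 + b ^ 2)
        - 2 * b * Jang a b pa pb ^ 2 / (a ^ 2 + b ^ 2) ^ 2) b := by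
  refine (((hasDerivAt_Jang_b.fun_pow 2).div hasDerivAt_sq_add_sq_b hU).add_const k1).congr_deriv ?_
  field_simp
  ring

theorem hasDerivAt_B1_pa :
    HasDerivAt (fun t => B1 k1 a b t pb) (-2 * b * Jang a b pa pb / (a ^ 2 + b ^ 2)) pa := by
  refine (((hasDerivAt_Jang_pa.fun_pow 2).div_const (a ^ 2 + b ^ 2)).add_const k1).congr_deriv ?_
  ring

theorem hasDerivAt_B1_pb :
    HasDerivAt (fun t => B1 k1 a b pa t) (2 * a * Jang a b pa pb / (a ^ 2 + b ^ 2)) pb := by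
  refine (((hasDerivAt_Jang_pb.fun_pow 2).div_const (a ^ 2 + b ^ 2)).add_const k1).congr_deriv ?_
  ring

theorem hasDerivAt_B2_a (hU : a ^ 2 + b ^ 2 ≠ 0) :
    HasDerivAt (fun t => B2 k2 k3 t b pa pb)
      ((pb * (a * pa + b * pb) + Jang a b pa pb * pa) / (a ^ 2 + b ^ 2)
        - 2 * a * Jang a b pa pb * (a * pa + b * pb) / (a ^ 2 + b ^ 2) ^ 2 + k3) a := by
  have hS := ((hasDerivAt_id' a).mul_const pa).add_const (b * pb)
  refine ((((hasDerivAt_Jang_a.fun_mul hS).div hasDerivAt_sq_add_sq_a hU).add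
    ((hasDerivAt_id' a).const_mul k3)).sub_const (k2 * b)).congr_deriv ?_
  field_simp

theorem hasDerivAt_B2_b (hU : a ^ 2 + b ^ 2 ≠ 0) :
    HasDerivAt (fun t => B2 k2 k3 a t pa pb)
      ((Jang a b pa pb * pb - pa * (a * pa + b * pb)) / (a ^ 2 + b ^ 2)
        - 2 * b * Jang a b pa pb * (a * pa + b * pb) / (a ^ 2 + b ^ 2) ^ 2 - k2) b := by
  have hS := ((hasDerivAt_id' b).mul_const pb).const_add (a * pa)
  refine ((((hasDerivAt_Jang_b.fun_mul hS).div hasDerivAt_sq_add_sq_b hU).add_const (k3 * a)).sub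
    ((hasDerivAt_id' b).const_mul k2)).congr_deriv ?_
  field_simp
  ring

theorem hasDerivAt_B2_pa :
    HasDerivAt (fun t => B2 k2 k3 a b t pb)
      ((a * Jang a b pa pb - b * (a * pa + b * pb)) / (a ^ 2 + b ^ 2)) pa := by
  have hS := ((hasDerivAt_id' pa).const_mul a).add_const (b * pb)
  refine ((((hasDerivAt_Jang_pa.fun_mul hS).div_const (a ^ 2 + b ^ 2)).add_const (k3 * a)).sub_const
    (k2 * b)).congr_deriv ?_
  ring

theorem hasDerivAt_B2_pb :
    HasDerivAt (fun t => B2 k2 k3 a b pa t)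
      ((b * Jang a b pa pb + a * (a * pa + b * pb)) / (a ^ 2 + b ^ 2)) pb := by
  have hS := ((hasDerivAt_id' pb).const_mul b).const_add (a * pa)
  refine ((((hasDerivAt_Jang_pb.fun_mul hS).div_const (a ^ 2 + b ^ 2)).add_const (k3 * a)).sub_const
    (k2 * b)).congr_deriv ?_
  ring

theorem hasDerivAt_HR_a (hU : a ^ 2 + b ^ 2 ≠ 0) :
    HasDerivAt (fun t => HR k1 k2 k3 t b pa pb)
      ((k2 - 2 * a * HR k1 k2 k3 a b pa pb) / (a ^ 2 + b ^ 2)) a := by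
  have hN := (((hasDerivAt_id' a).const_mul k2).const_add k1).add_const (k3 * b)
  refine (((hasDerivAt_const a (pa ^ 2 + pb ^ 2)).div (hasDerivAt_sq_add_sq_a.const_mul 2)
    (mul_ne_zero two_ne_zero hU)).add (hN.div hasDerivAt_sq_add_sq_a hU)).congr_deriv ?_
  unfold HR
  field_simp
  ring

theorem hasDerivAt_HR_b (hU : a ^ 2 + b ^ 2 ≠ 0) :
    HasDerivAt (fun t => HR k1 k2 k3 a t pa pb)
      ((k3 - 2 * b * HR k1 k2 k3 a b pa pb) / (a ^ 2 + b ^ 2)) b := by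
  have hN := ((hasDerivAt_id' b).const_mul k3).const_add (k1 + k2 * a)
  refine (((hasDerivAt_const b (pa ^ 2 + pb ^ 2)).div (hasDerivAt_sq_add_sq_b.const_mul 2)
    (mul_ne_zero two_ne_zero hU)).add (hN.div hasDerivAt_sq_add_sq_b hU)).congr_deriv ?_
  unfold HR
  field_simp
  ring

theorem hasDerivAt_HR_pa :
    HasDerivAt (fun t => HR k1 k2 k3 a b t pb) (pa / (a ^ 2 + b ^ 2)) pa := by
  refine ((((hasDerivAt_pow 2 pa).add_const (pb ^ 2)).div_const (2 * (a ^ 2 + b ^ 2))).add_const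
    ((k1 + k2 * a + k3 * b) / (a ^ 2 + b ^ 2))).congr_deriv ?_
  norm_num [mul_div_mul_left]

theorem hasDerivAt_HR_pb :
    HasDerivAt (fun t => HR k1 k2 k3 a b pa t) (pb / (a ^ 2 + b ^ 2)) pb := by
  refine ((((hasDerivAt_pow 2 pb).const_add (pa ^ 2)).div_const (2 * (a ^ 2 + b ^ 2))).add_const
    ((k1 + k2 * a + k3 * b) / (a ^ 2 + b ^ 2))).congr_deriv ?_
  norm_num [mul_div_mul_left]

end PhaseSpaceFunctions

section KeplerFlow

variable {k1 k2 k3 a b pa pb : ℝ}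

theorem separatelyDifferentiableAt_A1 (hU : a ^ 2 + b ^ 2 ≠ 0) :
    SeparatelyDifferentiableAt A1 a b pa pb :=
  ⟨(hasDerivAt_A1_a hU).differentiableAt, (hasDerivAt_A1_b hU).differentiableAt,
    differentiableAt_const _, differentiableAt_const _⟩

theorem separatelyDifferentiableAt_A2 (hU : a ^ 2 + b ^ 2 ≠ 0) :
    SeparatelyDifferentiableAt A2 a b pa pb :=
  ⟨(hasDerivAt_A2_a hU).differentiableAt, (hasDerivAt_A2_b hU).differentiableAt,
    differentiableAt_const _, differentiableAt_const _⟩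

theorem separatelyDifferentiableAt_B1 (hU : a ^ 2 + b ^ 2 ≠ 0) :
    SeparatelyDifferentiableAt (B1 k1) a b pa pb :=
  ⟨(hasDerivAt_B1_a hU).differentiableAt, (hasDerivAt_B1_b hU).differentiableAt,
    hasDerivAt_B1_pa.differentiableAt, hasDerivAt_B1_pb.differentiableAt⟩

theorem separatelyDifferentiableAt_B2 (hU : a ^ 2 + b ^ 2 ≠ 0) :
    SeparatelyDifferentiableAt (B2 k2 k3) a b pa pb :=
  ⟨(hasDerivAt_B2_a hU).differentiableAt, (hasDerivAt_B2_b hU).differentiableAt,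
    hasDerivAt_B2_pa.differentiableAt, hasDerivAt_B2_pb.differentiableAt⟩

theorem ddR_GammaVF (f : ℝ → ℝ → ℝ → ℝ → ℝ) (hU : a ^ 2 + b ^ 2 ≠ 0) :
    ddR f a b pa pb (GammaVF k1 k2 k3 a b pa pb) =
      (pdaR f a b pa pb * pa + pdbR f a b pa pb * pb
        - pdpaR f a b pa pb * (k2 - 2 * a * HR k1 k2 k3 a b pa pb)
        - pdpbR f a b pa pb * (k3 - 2 * b * HR k1 k2 k3 a b pa pb)) / (a ^ 2 + b ^ 2) := by
  simp only [ddR, GammaVF, hamVF, Matrix.cons_val_zero, Matrix.cons_val_one, Matrix.cons_val_two,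
    Matrix.cons_val_three, Matrix.head_cons, Matrix.tail_cons, pdaR, pdbR, pdpaR, pdpbR]
  rw [(hasDerivAt_HR_a hU).deriv, (hasDerivAt_HR_b hU).deriv, hasDerivAt_HR_pa.deriv,
    hasDerivAt_HR_pb.deriv]
  ring

theorem ddR_A1_GammaVF (hU : a ^ 2 + b ^ 2 ≠ 0) :
    ddR A1 a b pa pb (GammaVF k1 k2 k3 a b pa pb) = -(2 * lam a b pa pb) * A2 a b pa pb := by
  rw [ddR_GammaVF _ hU, pdaR, pdbR, (hasDerivAt_A1_a hU).deriv, (hasDerivAt_A1_b hU).deriv]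
  simp only [pdpaR, pdpbR, A1, A2, lam, Jang, deriv_const]
  field_simp
  ring

theorem ddR_A2_GammaVF (hU : a ^ 2 + b ^ 2 ≠ 0) :
    ddR A2 a b pa pb (GammaVF k1 k2 k3 a b pa pb) = 2 * lam a b pa pb * A1 a b pa pb := by
  rw [ddR_GammaVF _ hU, pdaR, pdbR, (hasDerivAt_A2_a hU).deriv, (hasDerivAt_A2_b hU).deriv]
  simp only [pdpaR, pdpbR, A1, A2, lam, Jang, deriv_const]
  field_simp
  ring

theorem ddR_B1_GammaVF (hU : a ^ 2 + b ^ 2 ≠ 0) :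
    ddR (B1 k1) a b pa pb (GammaVF k1 k2 k3 a b pa pb) =
      -(2 * lam a b pa pb) * B2 k2 k3 a b pa pb := by
  rw [ddR_GammaVF _ hU, pdaR, pdbR, pdpaR, pdpbR, (hasDerivAt_B1_a hU).deriv,
    (hasDerivAt_B1_b hU).deriv, hasDerivAt_B1_pa.deriv, hasDerivAt_B1_pb.deriv]
  unfold B2 HR lam Jang
  field_simp
  ring

theorem ddR_B2_GammaVF (hU : a ^ 2 + b ^ 2 ≠ 0) :
    ddR (B2 k2 k3) a b pa pb (GammaVF k1 k2 k3 a b pa pb) =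
      2 * lam a b pa pb * B1 k1 a b pa pb := by
  rw [ddR_GammaVF _ hU, pdaR, pdbR, pdpaR, pdpbR, (hasDerivAt_B2_a hU).deriv,
    (hasDerivAt_B2_b hU).deriv, hasDerivAt_B2_pa.deriv, hasDerivAt_B2_pb.deriv]
  unfold B1 HR lam Jang
  field_simp
  ring

theorem J3fun_eq : J3fun k1 k2 k3 =
    fun a b pa pb => A1 a b pa pb * B1 k1 a b pa pb + A2 a b pa pb * B2 k2 k3 a b pa pb := by
  ext a b pa pb
  simp [J3fun, Afun, Bfun, Complex.mul_re]

theorem J4fun_eq : J4fun k1 k2 k3 =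
    fun a b pa pb => A2 a b pa pb * B1 k1 a b pa pb - A1 a b pa pb * B2 k2 k3 a b pa pb := by
  ext a b pa pb
  simp only [J4fun, Afun, Bfun, map_add, map_mul, conj_ofReal, conj_I, mul_im, mul_re, add_re,
    add_im, neg_re, neg_im, ofReal_re, ofReal_im, I_re, I_im, neg_mul, mul_neg, zero_mul, mul_zero,
    one_mul, sub_self, add_zero, zero_add, neg_zero]
  ring

theorem Om1_GammaVF (hU : a ^ 2 + b ^ 2 ≠ 0) (v : Fin 4 → ℝ) :
    Om1 k1 k2 k3 a b pa pb (GammaVF k1 k2 k3 a b pa pb) v =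
      -(2 * lam a b pa pb) * ddR (J4fun k1 k2 k3) a b pa pb v := by
  rw [J4fun_eq]
  exact wedgeR_add_wedgeR_of_rotating (separatelyDifferentiableAt_A1 hU)
    (separatelyDifferentiableAt_A2 hU) (separatelyDifferentiableAt_B1 hU)
    (separatelyDifferentiableAt_B2 hU) (ddR_A1_GammaVF hU) (ddR_A2_GammaVF hU)
    (ddR_B1_GammaVF hU) (ddR_B2_GammaVF hU) v

theorem Om2_GammaVF (hU : a ^ 2 + b ^ 2 ≠ 0) (v : Fin 4 → ℝ) :
    Om2 k1 k2 k3 a b pa pb (GammaVF k1 k2 k3 a b pa pb) v =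
      2 * lam a b pa pb * ddR (J3fun k1 k2 k3) a b pa pb v := by
  rw [J3fun_eq]
  exact neg_wedgeR_add_wedgeR_of_rotating (separatelyDifferentiableAt_A1 hU)
    (separatelyDifferentiableAt_A2 hU) (separatelyDifferentiableAt_B1 hU)
    (separatelyDifferentiableAt_B2 hU) (ddR_A1_GammaVF hU) (ddR_A2_GammaVF hU)
    (ddR_B1_GammaVF hU) (ddR_B2_GammaVF hU) v

end KeplerFlow

/-- with `Y₃`, `Y₄` the Hamiltonian vector fields of `J₃`, `J₄`,
`Γ` is `Ω₁`-orthogonal to `Y₄` and `Ω₂`-orthogonal to `Y₃`. -/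
theorem stmt10 (k1 k2 k3 : ℝ) (a b pa pb : ℝ) (hU : a ^ 2 + b ^ 2 ≠ 0) :
    Om1 k1 k2 k3 a b pa pb (GammaVF k1 k2 k3 a b pa pb)
        (hamVF (J4fun k1 k2 k3) a b pa pb) = 0 ∧
      Om2 k1 k2 k3 a b pa pb (GammaVF k1 k2 k3 a b pa pb)
        (hamVF (J3fun k1 k2 k3) a b pa pb) = 0 := by
  rw [Om1_GammaVF hU, Om2_GammaVF hU, ddR_hamVF_self, ddR_hamVF_self]
  exact ⟨mul_zero _, mul_zero _⟩
end
end

section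
/- Let Mat₁(x) and Mat₂(x) be the 4×4 antisymmetric matrices of components of Ω₁ and Ω₂ in the standard basis of ℝ⁴ (i.e. (Mat_k)_{ij}(x) = Ω_k(x)(e_i, e_j)), and let S be the matrix of the canonical symplectic form ω₀ = da ∧ dp_a + db ∧ dp_b. Then the recursion operators R₁ = S⁻¹·Mat₁ and R₂ = S⁻¹·Mat₂ satisfy det R₁ = det R₂ = 0 at every point of U. -/
noncomputable section

open Complex

/-- The canonical symplectic form `ω₀ = da ∧ dp_a + db ∧ dp_b`. -/
def omega0 (a b pa pb : ℝ) (u v : Fin 4 → ℝ) : ℝ :=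
  wedgeR (fun a _ _ _ => a) (fun _ _ pa _ => pa) a b pa pb u v
    + wedgeR (fun _ b _ _ => b) (fun _ _ _ pb => pb) a b pa pb u v

/-!
Since `A₁ + i A₂ = e^{2iθ}` for the polar angle `θ` of `(a, b)`, we have `dA₁ = -2 A₂ dθ` and
`dA₂ = 2 A₁ dθ`, so `Ω₁ = 2 dθ ∧ (A₁ dB₂ - A₂ dB₁)` and `Ω₂ = 2 dθ ∧ (A₁ dB₁ + A₂ dB₂)` are
decomposable. The matrix `u vᵀ - v uᵀ` of a decomposable 2-form `u ∧ v` has rank at most 2, hence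
is singular in dimension 4, and so are `S⁻¹ Mat₁` and `S⁻¹ Mat₂`.
-/

namespace Matrix

variable {n R : Type*} [CommRing R]

def wedgeMatrix (u v : n → R) : Matrix n n R := of fun i j => u i * v j - u j * v i

theorem wedgeMatrix_eq_mul [Fintype n] (u v : n → R) :
    wedgeMatrix u v = (of fun i => ![u i, v i]) * of ![v, -u] := by
  ext i j
  simp only [wedgeMatrix, mul_apply, Fin.sum_univ_two, of_apply, cons_val_zero, cons_val_one,
    Pi.neg_apply]
  ring

theorem wedgeMatrix_smul_add_smul (w v₁ v₂ : n → R) (c₁ c₂ : R) :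
    wedgeMatrix (c₁ • w) v₁ + wedgeMatrix (c₂ • w) v₂ = wedgeMatrix w (c₁ • v₁ + c₂ • v₂) := by
  ext i j
  simp only [wedgeMatrix, add_apply, of_apply, Pi.add_apply, Pi.smul_apply, smul_eq_mul]
  ring

theorem rank_wedgeMatrix_le [Fintype n] [Nontrivial R] (u v : n → R) :
    (wedgeMatrix u v).rank ≤ 2 := by
  rw [wedgeMatrix_eq_mul]
  exact (rank_mul_le_left _ _).trans <| (rank_le_card_width _).trans_eq (Fintype.card_fin 2)

theorem det_wedgeMatrix_eq_zero [Fintype n] [DecidableEq n] [IsDomain R]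
    (hn : 2 < Fintype.card n) (u v : n → R) : (wedgeMatrix u v).det = 0 := by
  by_contra h
  exact hn.not_ge (rank_of_det_ne_zero h ▸ rank_wedgeMatrix_le u v)

end Matrix

open Matrix

def gradR (f : ℝ → ℝ → ℝ → ℝ → ℝ) (a b pa pb : ℝ) : Fin 4 → ℝ :=
  ![pdaR f a b pa pb, pdbR f a b pa pb, pdpaR f a b pa pb, pdpbR f a b pa pb]

theorem ddR_ebasis (f : ℝ → ℝ → ℝ → ℝ → ℝ) (a b pa pb : ℝ) (i : Fin 4) :
    ddR f a b pa pb (ebasis i) = gradR f a b pa pb i := by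
  fin_cases i <;> simp [ddR, gradR, ebasis]

theorem wedgeR_ebasis (f g : ℝ → ℝ → ℝ → ℝ → ℝ) (a b pa pb : ℝ) (i j : Fin 4) :
    wedgeR f g a b pa pb (ebasis i) (ebasis j)
      = wedgeMatrix (gradR f a b pa pb) (gradR g a b pa pb) i j := by
  simp [wedgeR, wedgeMatrix, ddR_ebasis]

/-- `dθ = (a db - b da)/(a² + b²)` for the polar angle `θ` of `(a, b)`; `A₁ + i A₂ = e^{2iθ}`. -/
def angleCovector (a b : ℝ) : Fin 4 → ℝ := ![-b / (a ^ 2 + b ^ 2), a / (a ^ 2 + b ^ 2), 0, 0]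

section

variable {a b : ℝ} (pa pb : ℝ)

theorem gradR_A1 (h : a ^ 2 + b ^ 2 ≠ 0) :
    gradR A1 a b pa pb = (-2 * A2 a b pa pb) • angleCovector a b := by
  have ha : HasDerivAt (fun t : ℝ => (t ^ 2 - b ^ 2) / (t ^ 2 + b ^ 2))
      (-2 * (2 * a * b / (a ^ 2 + b ^ 2)) * (-b / (a ^ 2 + b ^ 2))) a :=
    (((hasDerivAt_pow 2 a).sub_const _).div ((hasDerivAt_pow 2 a).add_const _) h).congr_deriv
      (by field_simp; ring)
  have hb : HasDerivAt (fun t : ℝ => (a ^ 2 - t ^ 2) / (a ^ 2 + t ^ 2))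
      (-2 * (2 * a * b / (a ^ 2 + b ^ 2)) * (a / (a ^ 2 + b ^ 2))) b :=
    (((hasDerivAt_pow 2 b).const_sub _).div ((hasDerivAt_pow 2 b).const_add _) h).congr_deriv
      (by field_simp; ring)
  ext i
  fin_cases i <;>
    simp [gradR, pdaR, pdbR, pdpaR, pdpbR, A1, A2, angleCovector, ha.deriv, hb.deriv]

theorem gradR_A2 (h : a ^ 2 + b ^ 2 ≠ 0) :
    gradR A2 a b pa pb = (2 * A1 a b pa pb) • angleCovector a b := by
  have ha : HasDerivAt (fun t : ℝ => 2 * t * b / (t ^ 2 + b ^ 2))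
      (2 * ((a ^ 2 - b ^ 2) / (a ^ 2 + b ^ 2)) * (-b / (a ^ 2 + b ^ 2))) a :=
    (((hasDerivAt_id' a).const_mul 2 |>.mul_const b).div
      ((hasDerivAt_pow 2 a).add_const _) h).congr_deriv (by field_simp; ring)
  have hb : HasDerivAt (fun t : ℝ => 2 * a * t / (a ^ 2 + t ^ 2))
      (2 * ((a ^ 2 - b ^ 2) / (a ^ 2 + b ^ 2)) * (a / (a ^ 2 + b ^ 2))) b :=
    (((hasDerivAt_id' b).const_mul (2 * a)).div
      ((hasDerivAt_pow 2 b).const_add _) h).congr_deriv (by field_simp; ring)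
  ext i
  fin_cases i <;>
    simp [gradR, pdaR, pdbR, pdpaR, pdpbR, A1, A2, angleCovector, ha.deriv, hb.deriv]

end

section

variable (k1 k2 k3 a b pa pb : ℝ)

theorem of_Om1_ebasis :
    (of fun i j => Om1 k1 k2 k3 a b pa pb (ebasis i) (ebasis j)) =
      wedgeMatrix (gradR A1 a b pa pb) (gradR (B1 k1) a b pa pb)
        + wedgeMatrix (gradR A2 a b pa pb) (gradR (B2 k2 k3) a b pa pb) := by
  ext i j
  simp only [Om1, wedgeR_ebasis, of_apply, Matrix.add_apply]

theorem of_Om2_ebasis :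
    (of fun i j => Om2 k1 k2 k3 a b pa pb (ebasis i) (ebasis j)) =
      wedgeMatrix (gradR A1 a b pa pb) (-gradR (B2 k2 k3) a b pa pb)
        + wedgeMatrix (gradR A2 a b pa pb) (gradR (B1 k1) a b pa pb) := by
  ext i j
  simp only [Om2, wedgeR_ebasis, wedgeMatrix, of_apply, Matrix.add_apply, Pi.neg_apply]
  ring

end

/-- the recursion operators `R₁ = S⁻¹·Mat₁` and `R₂ = S⁻¹·Mat₂` have
vanishing determinant at every point of `U`. -/
theorem stmt11 (k1 k2 k3 : ℝ) (a b pa pb : ℝ) (hU : a ^ 2 + b ^ 2 ≠ 0) :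
    (fun (S Mat1 Mat2 : Matrix (Fin 4) (Fin 4) ℝ) =>
        (S⁻¹ * Mat1).det = 0 ∧ (S⁻¹ * Mat2).det = 0)
      (Matrix.of fun i j => omega0 a b pa pb (ebasis i) (ebasis j))
      (Matrix.of fun i j => Om1 k1 k2 k3 a b pa pb (ebasis i) (ebasis j))
      (Matrix.of fun i j => Om2 k1 k2 k3 a b pa pb (ebasis i) (ebasis j)) := by
  have hcard : 2 < Fintype.card (Fin 4) := by simp
  simp only [det_mul, of_Om1_ebasis, of_Om2_ebasis, gradR_A1 pa pb hU, gradR_A2 pa pb hU,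
    wedgeMatrix_smul_add_smul, det_wedgeMatrix_eq_zero hcard, mul_zero, and_self]
end
end
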